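/- arXiv:0708.1730 — 4 statements merged into one kernel-verified Lean document; each statement's English description precedes it below -/
import Mathlib

section
/- Let m ≥ 1 and let E ⊆ ℝ^m be countable. Define transfinitely E^0 = E, E^{χ+1} = E^χ ∩ gd(E^χ) for every ordinal χ, and E^χ = ⋂_{ψ < χ} E^ψ for every limit ordinal χ. Then E is a conical limit set if and only if there exists an ordinal χ such that E^χ = ∅. -/
open Filter Topology

/-- The open upper half-space over a normed space `V`: pairs `(t, v)` with `t > 0`. -/
def upperHalf (V : Type*) [NormedAddCommGroup V] : Set (ℝ × V) := {p | 0 < p.1}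

/-- The conical limit set of `E ⊆ ℝ × V`: points `x` for which there are `C > 0` and a
sequence `(t_n, v_n)` in `E` with `t_n → 0`, `v_n → x` and `‖v_n - x‖ ≤ C * t_n`. -/
def conicalLimitSet {V : Type*} [NormedAddCommGroup V] (E : Set (ℝ × V)) : Set V :=
  {x | ∃ C > 0, ∃ w : ℕ → ℝ × V, (∀ n, w n ∈ E) ∧
    Tendsto (fun n => (w n).1) atTop (𝓝 (0 : ℝ)) ∧
    Tendsto (fun n => (w n).2) atTop (𝓝 x) ∧
    ∀ n, ‖(w n).2 - x‖ ≤ C * (w n).1}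

/-- `X ⊆ V` is a conical limit set if it is the conical limit set of some subset of the
upper half-space. -/
def IsConicalLimitSet {V : Type*} [NormedAddCommGroup V] (X : Set V) : Prop :=
  ∃ E ⊆ upperHalf V, conicalLimitSet E = X

/-- The set of good points of `E`: `z ∈ gd E` iff for every `ε > 0` there is `δ > 0`
such that every `v` with `0 < ‖v - z‖ < δ` lies within `ε * ‖v - z‖` of a point of `E`. -/
def gd {V : Type*} [NormedAddCommGroup V] (E : Set V) : Set V :=
  {z | ∀ ε > 0, ∃ δ > 0, ∀ v, 0 < ‖v - z‖ → ‖v - z‖ < δ → ∃ x ∈ E, ‖x - v‖ < ε * ‖v - z‖}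

/-- Transfinite iteration: `gdIter E 0 = E`, `gdIter E (χ+1) = gdIter E χ ∩ gd (gdIter E χ)`,
and `gdIter E χ = ⋂_{ψ < χ} gdIter E ψ` at limit ordinals `χ`. -/
noncomputable def gdIter {V : Type*} [NormedAddCommGroup V] (E : Set V) (χ : Ordinal) :
    Set V :=
  Ordinal.limitRecOn χ E (fun _ S => S ∩ gd S)
    (fun χ _ ih => ⋂ (ψ : Ordinal) (h : ψ < χ), ih ψ h)

/-!
If the iteration never dies out, it stabilises at a nonempty `F ⊆ E` with `F ⊆ gd F`. A conical
limit set containing such an `F` is uncountable: near a point of `F` the `gd` property turns a cone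
point of arbitrary aperture into a nearby point of `F` seen in a cone of aperture one, so the points
of `closure F` having aperture-one cone points at every height form a dense `G_δ` of
`closure F`, and Baire's theorem yields one outside any given countable set.

Conversely, if `E^χ = ∅`, every `x ∈ E` has a rank `ψ` with `x ∈ E^ψ \ gd E^ψ`, witnessed by
points `v → x` at distance at least `ε_x ‖v - x‖` from `E^ψ`. Lifting them to height
`ε_x w_x ‖v - x‖`, with weights `w_x → 0` along an enumeration of `E`, gives a set whose conical
limit set is `E`. A conical limit point outside `E` would be approached by the apexes with
`w_x → 0`; an apex of minimal rank far along the sequence then has the limit point in the closure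
of its `E^ψ`, contradicting the gap once `C w_x < 1`.
-/

universe u

section GdIter

variable {V : Type*} [NormedAddCommGroup V] (E : Set V)

theorem gdIter_zero : gdIter E 0 = E :=
  Ordinal.limitRecOn_zero _ _ _

theorem gdIter_add_one (χ : Ordinal.{u}) : gdIter E (χ + 1) = gdIter E χ ∩ gd (gdIter E χ) :=
  Ordinal.limitRecOn_add_one _ _ _ _

theorem gdIter_of_isSuccLimit {χ : Ordinal.{u}} (hχ : Order.IsSuccLimit χ) :
    gdIter E χ = ⋂ ψ < χ, gdIter E ψ :=
  Ordinal.limitRecOn_limit _ _ _ _ hχ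

theorem gdIter_antitone : Antitone (gdIter.{_, u} E) := by
  suffices h : ∀ χ : Ordinal.{u}, ∀ ψ < χ, gdIter E χ ⊆ gdIter E ψ from
    fun ψ χ hle => hle.eq_or_lt.elim (fun h => h ▸ subset_rfl) (h χ ψ)
  intro χ
  induction χ using Ordinal.limitRecOn with
  | zero => simp
  | add_one χ ih =>
    intro ψ hψ
    rw [gdIter_add_one]
    rcases (Order.lt_add_one_iff.mp hψ).eq_or_lt with rfl | hlt
    · exact Set.inter_subset_left
    · exact Set.inter_subset_left.trans (ih ψ hlt)
  | limit χ hχ _ =>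
    intro ψ hψ
    rw [gdIter_of_isSuccLimit E hχ]
    exact Set.biInter_subset_of_mem hψ

theorem gdIter_subset (χ : Ordinal.{u}) : gdIter E χ ⊆ E :=
  (gdIter_antitone E (zero_le (a := χ))).trans_eq (gdIter_zero E)

theorem exists_mem_gdIter_notMem_gd {x : V} (hx : x ∈ E) {χ : Ordinal.{u}}
    (hχ : gdIter E χ = ∅) : ∃ ψ : Ordinal.{u}, x ∈ gdIter E ψ ∧ x ∉ gd (gdIter E ψ) := by
  by_contra! h
  suffices ∀ ψ : Ordinal.{u}, x ∈ gdIter E ψ by simpa [hχ] using this χ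
  intro ψ
  induction ψ using Ordinal.limitRecOn with
  | zero => rwa [gdIter_zero]
  | add_one ψ ih => rw [gdIter_add_one]; exact ⟨ih, h ψ ih⟩
  | limit ψ hψ ih => rw [gdIter_of_isSuccLimit E hψ]; exact Set.mem_iInter₂.mpr ih

end GdIter

theorem exists_gdIter_subset_gd {V : Type} [NormedAddCommGroup V] (E : Set V) :
    ∃ χ : Ordinal.{u}, gdIter E χ ⊆ gd (gdIter E χ) := by
  obtain ⟨ψ, χ, heq, hne⟩ :=
    Function.not_injective_iff.mp (not_injective_of_ordinal (gdIter.{0, u} E))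
  wlog hlt : ψ < χ generalizing ψ χ
  · exact this χ ψ heq.symm hne.symm (hne.symm.lt_or_gt.resolve_right hlt)
  refine ⟨ψ, fun x hx => ?_⟩
  have : x ∈ gdIter E (ψ + 1) := gdIter_antitone E (Order.add_one_le_iff.mpr hlt) (heq ▸ hx)
  exact (gdIter_add_one E ψ ▸ this).2

section ConicalLimitSet

variable {V : Type*} [NormedAddCommGroup V] {E' : Set (ℝ × V)} {x : V}

theorem conicalLimitSet_mono {E'' : Set (ℝ × V)} (h : E' ⊆ E'') :
    conicalLimitSet E' ⊆ conicalLimitSet E'' :=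
  fun _ ⟨C, hC, w, hw, hw'⟩ => ⟨C, hC, w, fun n => h (hw n), hw'⟩

theorem mem_conicalLimitSet_iff (hE' : E' ⊆ upperHalf V) :
    x ∈ conicalLimitSet E' ↔ ∃ C > 0, ∀ ε > 0, ∃ p ∈ E', p.1 < ε ∧ ‖p.2 - x‖ ≤ C * p.1 := by
  constructor
  · rintro ⟨C, hC, w, hwE, ht, -, hcone⟩
    refine ⟨C, hC, fun ε hε => ?_⟩
    obtain ⟨n, hn⟩ := (ht.eventually (gt_mem_nhds hε)).exists
    exact ⟨w n, hwE n, hn, hcone n⟩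
  · rintro ⟨C, hC, h⟩
    choose w hwE ht hcone using fun n : ℕ => h (1 / (n + 1)) Nat.one_div_pos_of_nat
    have ht0 : Tendsto (fun n => (w n).1) atTop (𝓝 0) :=
      squeeze_zero (fun n => (hE' (hwE n)).le) (fun n => (ht n).le)
        tendsto_one_div_add_atTop_nhds_zero_nat
    refine ⟨C, hC, w, hwE, ht0, ?_, hcone⟩
    rw [tendsto_iff_norm_sub_tendsto_zero]
    exact squeeze_zero (fun n => norm_nonneg _) hcone (by simpa using ht0.const_mul C)

end ConicalLimitSet

theorem dense_preimage_coe_closure {X : Type*} [TopologicalSpace X] {F U : Set X}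
    (h : F ⊆ closure (F ∩ U)) : Dense ((↑) ⁻¹' U : Set (closure F)) := by
  rw [Subtype.dense_iff, Subtype.image_preimage_coe]
  exact closure_minimal (h.trans (closure_mono (Set.inter_subset_inter_left _ subset_closure)))
    isClosed_closure

section Forward

variable {V : Type*} [NormedAddCommGroup V] {E' : Set (ℝ × V)} {F : Set V} {z : V}

theorem mem_closure_diff_singleton_of_mem_gd [NormedSpace ℝ V] [Nontrivial V] (hz : z ∈ gd F) :
    z ∈ closure (F \ {z}) := by
  rw [Metric.mem_closure_iff]
  intro θ hθ
  obtain ⟨δ, hδ, hgd⟩ := hz (1 / 2) one_half_pos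
  obtain ⟨u, hu⟩ := exists_norm_eq V (c := min δ θ / 2) (by positivity)
  have hδθ : min δ θ / 2 < min δ θ := half_lt_self (by positivity)
  obtain ⟨x, hxF, hxu⟩ := hgd (z + u) (by rw [add_sub_cancel_left, hu]; positivity)
    (by simpa [hu] using hδθ.trans_le (min_le_left δ θ))
  rw [add_sub_cancel_left, hu] at hxu
  have hxz : x - z = u + (x - (z + u)) := by abel
  have hlower := norm_sub_norm_le u (-(x - (z + u)))
  have hupper := norm_add_le u (x - (z + u))
  rw [norm_neg, sub_neg_eq_add, ← hxz, hu] at hlower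
  rw [← hxz, hu] at hupper
  refine ⟨x, ⟨hxF, ?_⟩, ?_⟩
  · rintro (rfl : x = z)
    rw [sub_self, norm_zero] at hlower
    linarith [lt_min hδ hθ]
  · rw [dist_comm, dist_eq_norm]
    linarith [min_le_right δ θ]

theorem exists_mem_near_of_mem_conicalLimitSet (hE' : E' ⊆ upperHalf V)
    (hzΛ : z ∈ conicalLimitSet E') (hzF : z ∈ F) (hzgd : z ∈ gd F) {θ : ℝ} (hθ : 0 < θ) :
    ∃ x ∈ F, ‖x - z‖ < θ ∧ ∃ p ∈ E', p.1 < θ ∧ ‖x - p.2‖ < p.1 := by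
  obtain ⟨C, hC, hcone⟩ := (mem_conicalLimitSet_iff hE').1 hzΛ
  obtain ⟨δ, hδ, hgd⟩ := hzgd (1 / (C + 1)) (by positivity)
  obtain ⟨p, hpE, hpt, hpC⟩ := hcone (min θ δ / (C + 1)) (by positivity)
  have ht : 0 < p.1 := hE' hpE
  have hCt : (C + 1) * p.1 < min θ δ := (lt_div_iff₀' (by positivity)).1 hpt
  have hθ' := min_le_left θ δ
  rcases eq_or_ne p.2 z with hpz | hpz
  · exact ⟨z, hzF, by simpa using hθ, p, hpE, by nlinarith, by simpa [hpz] using ht⟩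
  obtain ⟨x, hxF, hxp⟩ := hgd p.2 (norm_pos_iff.2 (sub_ne_zero.2 hpz))
    (by nlinarith [min_le_right θ δ])
  have hxp' : ‖x - p.2‖ < p.1 := by
    refine hxp.trans_le ?_
    rw [one_div, inv_mul_le_iff₀ (by positivity)]
    nlinarith
  refine ⟨x, hxF, ?_, p, hpE, by nlinarith, hxp'⟩
  calc ‖x - z‖ ≤ ‖x - p.2‖ + ‖p.2 - z‖ := norm_sub_le_norm_sub_add_norm_sub _ _ _
    _ < θ := by nlinarith

theorem not_countable_conicalLimitSet [NormedSpace ℝ V] [CompleteSpace V] [Nontrivial V]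
    (hE' : E' ⊆ upperHalf V) (hF : F.Nonempty) (hFΛ : F ⊆ conicalLimitSet E')
    (hFgd : F ⊆ gd F) : ¬ (conicalLimitSet E').Countable := by
  intro hcount
  have : Countable (conicalLimitSet E') := hcount.to_subtype
  have : CompleteSpace (closure F) := isClosed_closure.completeSpace_coe
  have : Nonempty (closure F) := (hF.mono subset_closure).to_subtype
  let G : ℕ → Set V := fun n => ⋃ p ∈ {p ∈ E' | p.1 < 1 / (n + 1)}, Metric.ball p.2 p.1
  have hG : ∀ n, F ⊆ closure (F ∩ G n) := by
    intro n z hz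
    rw [Metric.mem_closure_iff]
    intro θ hθ
    obtain ⟨x, hxF, hxz, p, hpE, hpt, hxp⟩ := exists_mem_near_of_mem_conicalLimitSet hE'
      (hFΛ hz) hz (hFgd hz) (lt_min hθ Nat.one_div_pos_of_nat)
    refine ⟨x, ⟨hxF, Set.mem_biUnion ⟨hpE, hpt.trans_le (min_le_right _ _)⟩
      (mem_ball_iff_norm.2 hxp)⟩, ?_⟩
    rw [dist_comm, dist_eq_norm]
    exact hxz.trans_le (min_le_left _ _)
  have hcompl : ∀ e : V, F ⊆ closure (F ∩ {e}ᶜ) := by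
    intro e z hz
    rcases eq_or_ne z e with rfl | hne
    · exact mem_closure_diff_singleton_of_mem_gd (hFgd hz)
    · exact subset_closure ⟨hz, hne⟩
  let U : ℕ ⊕ conicalLimitSet E' → Set V := Sum.elim G fun e => {(e : V)}ᶜ
  have hU_open : ∀ i, IsOpen (U i) := by
    rintro (n | e)
    · exact isOpen_biUnion fun p _ => Metric.isOpen_ball
    · exact isOpen_compl_singleton
  have hU_dense : ∀ i, F ⊆ closure (F ∩ U i) := by
    rintro (n | e)
    exacts [hG n, hcompl e]
  obtain ⟨y, hy⟩ := (dense_iInter_of_isOpen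
    (fun i => (hU_open i).preimage continuous_subtype_val)
    (fun i => dense_preimage_coe_closure (hU_dense i))).nonempty
  simp only [Set.mem_iInter, Sum.forall] at hy
  have hyΛ : (y : V) ∈ conicalLimitSet E' := by
    rw [mem_conicalLimitSet_iff hE']
    refine ⟨1, one_pos, fun ε hε => ?_⟩
    obtain ⟨n, hn⟩ := exists_nat_one_div_lt hε
    obtain ⟨p, ⟨hpE, hpt⟩, hyp⟩ := Set.mem_iUnion₂.1 (hy.1 n)
    refine ⟨p, hpE, hpt.trans hn, ?_⟩
    rw [one_mul, norm_sub_rev]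
    exact (mem_ball_iff_norm.1 hyp).le
  exact hy.2 ⟨_, hyΛ⟩ rfl

end Forward

theorem IsConicalLimitSet.exists_gdIter_eq_empty {V : Type} [NormedAddCommGroup V]
    [NormedSpace ℝ V] [CompleteSpace V] [Nontrivial V] {E : Set V} (h : IsConicalLimitSet E)
    (hE : E.Countable) : ∃ χ : Ordinal.{u}, gdIter E χ = ∅ := by
  obtain ⟨E', hE', rfl⟩ := h
  obtain ⟨χ, hχ⟩ := exists_gdIter_subset_gd.{u} (conicalLimitSet E')
  exact ⟨χ, Set.not_nonempty_iff_eq_empty.1 fun hne =>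
    not_countable_conicalLimitSet hE' hne (gdIter_subset _ χ) hχ hE⟩

section Backward

variable {V : Type*} [NormedAddCommGroup V]

theorem exists_gap_of_notMem_gd {A : Set V} {x : V} (hx : x ∉ gd A) :
    ∃ ε > 0, ∀ δ > 0, ∃ v, 0 < ‖v - x‖ ∧ ‖v - x‖ < δ ∧ ∀ z ∈ A, ε * ‖v - x‖ ≤ ‖z - v‖ := by
  simpa [gd] using hx

/-- The height `ε * w * ‖v - x‖` is what makes a cone of aperture `C` with `C * w < 1` unable to
reach `closure A` (`one_le_mul_of_mem_gapCone`). -/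
def gapCone (A : Set V) (x : V) (ε w : ℝ) : Set (ℝ × V) :=
  {p | p.1 = ε * w * ‖p.2 - x‖ ∧ 0 < ‖p.2 - x‖ ∧ ‖p.2 - x‖ ≤ w ∧
    ∀ z ∈ A, ε * ‖p.2 - x‖ ≤ ‖z - p.2‖}

variable {A : Set V} {x : V} {ε w : ℝ}

theorem gapCone_subset_upperHalf (hε : 0 < ε) (hw : 0 < w) : gapCone A x ε w ⊆ upperHalf V :=
  fun p ⟨hp, hpos, _⟩ => show 0 < p.1 by rw [hp]; positivity

theorem mem_conicalLimitSet_gapCone (hε : 0 < ε) (hw : 0 < w)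
    (hgap : ∀ δ > 0, ∃ v, 0 < ‖v - x‖ ∧ ‖v - x‖ < δ ∧ ∀ z ∈ A, ε * ‖v - x‖ ≤ ‖z - v‖) :
    x ∈ conicalLimitSet (gapCone A x ε w) := by
  rw [mem_conicalLimitSet_iff (gapCone_subset_upperHalf hε hw)]
  refine ⟨(ε * w)⁻¹, by positivity, fun η hη => ?_⟩
  obtain ⟨v, hpos, hlt, hA⟩ := hgap (min w (η / (ε * w))) (by positivity)
  refine ⟨(ε * w * ‖v - x‖, v), ⟨rfl, hpos, hlt.le.trans (min_le_left _ _), hA⟩, ?_, ?_⟩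
  · exact (lt_div_iff₀' (by positivity)).1 (hlt.trans_le (min_le_right _ _))
  · rw [← mul_assoc, inv_mul_cancel₀ (by positivity), one_mul]

theorem one_le_mul_of_mem_gapCone {p : ℝ × V} (hp : p ∈ gapCone A x ε w) (hε : 0 < ε) {y : V}
    (hy : y ∈ closure A) {C : ℝ} (hyp : ‖p.2 - y‖ ≤ C * p.1) : 1 ≤ C * w := by
  obtain ⟨ht, hpos, -, hA⟩ := hp
  have hclosed : IsClosed {z : V | ε * ‖p.2 - x‖ ≤ ‖z - p.2‖} :=
    isClosed_le continuous_const (continuous_id.sub continuous_const).norm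
  have hy' : ε * ‖p.2 - x‖ ≤ ‖y - p.2‖ := closure_minimal hA hclosed hy
  rw [norm_sub_rev, ht] at hyp
  have : ε * ‖p.2 - x‖ * 1 ≤ ε * ‖p.2 - x‖ * (C * w) := by linarith
  exact le_of_mul_le_mul_left this (by positivity)

theorem eq_of_frequently_norm_sub_le {t : ℕ → ℝ} {v : ℕ → V} {y : V} {c : ℝ}
    (ht : Tendsto t atTop (𝓝 0)) (hv : Tendsto v atTop (𝓝 y))
    (h : ∃ᶠ k in atTop, ‖v k - x‖ ≤ c * t k) : y = x := by
  let l := atTop ⊓ 𝓟 {k | ‖v k - x‖ ≤ c * t k}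
  have : l.NeBot := frequently_iff_neBot.1 h
  refine tendsto_nhds_unique (f := v) (l := l) (hv.mono_left inf_le_left) ?_
  rw [tendsto_iff_norm_sub_tendsto_zero]
  refine squeeze_zero' (Eventually.of_forall fun k => norm_nonneg _)
    (mem_inf_of_right (mem_principal_self _)) ?_
  simpa using (ht.const_mul c).mono_left inf_le_left

theorem conicalLimitSet_iUnion_gapCone_subset {ι : Type*} [LinearOrder ι] [WellFoundedLT ι]
    {A : ι → Set V} (hA : Antitone A) {E : Set V} {r : E → ι} (hr : ∀ x, (x : V) ∈ A (r x))
    {ε w : E → ℝ} (hε : ∀ x, 0 < ε x) (hw : ∀ x, 0 < w x) (hw0 : Tendsto w cofinite (𝓝 0)) :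
    conicalLimitSet (⋃ x : E, gapCone (A (r x)) x (ε x) (w x)) ⊆ E := by
  rintro y ⟨C, hC, p, hpE, ht, hv, hcone⟩
  choose x hx using fun k => Set.mem_iUnion.1 (hpE k)
  by_cases hrep : ∃ x₀ : E, ∃ᶠ k in atTop, x k = x₀
  · obtain ⟨x₀, hx₀⟩ := hrep
    have hεw : ε x₀ * w x₀ ≠ 0 := (mul_pos (hε x₀) (hw x₀)).ne'
    suffices y = x₀ from this ▸ x₀.2
    refine eq_of_frequently_norm_sub_le (c := (ε x₀ * w x₀)⁻¹) ht hv (hx₀.mono fun k hk => ?_)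
    have hpk := (hx k).1
    rw [hk] at hpk
    rw [hpk, ← mul_assoc, inv_mul_cancel₀ hεw, one_mul]
  push Not at hrep
  exfalso
  have hwx : Tendsto (fun k => w (x k)) atTop (𝓝 0) :=
    hw0.comp (le_cofinite_iff_eventually_ne.2 hrep)
  have hxy : Tendsto (fun k => (x k : V)) atTop (𝓝 y) := by
    rw [tendsto_iff_norm_sub_tendsto_zero]
    refine squeeze_zero (fun k => norm_nonneg _) (fun k => ?_)
      (by simpa using hwx.add (ht.const_mul C))
    calc ‖(x k : V) - y‖ ≤ ‖(x k : V) - (p k).2‖ + ‖(p k).2 - y‖ :=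
          norm_sub_le_norm_sub_add_norm_sub ..
      _ ≤ w (x k) + C * (p k).1 :=
          add_le_add ((norm_sub_rev _ _).trans_le (hx k).2.2.1) (hcone k)
  obtain ⟨K, hK⟩ := eventually_atTop.1 (hwx.eventually (gt_mem_nhds (one_div_pos.2 hC)))
  obtain ⟨_, ⟨k₀, hk₀K, rfl⟩, hmin⟩ := wellFounded_lt.has_min ((fun k => r (x k)) '' Set.Ici K)
    ⟨_, Set.mem_image_of_mem _ Set.self_mem_Ici⟩
  have hy : y ∈ closure (A (r (x k₀))) := mem_closure_of_tendsto hxy <| eventually_atTop.2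
    ⟨K, fun k hk => hA (not_lt.1 (hmin _ (Set.mem_image_of_mem _ hk))) (hr (x k))⟩
  have h1 := one_le_mul_of_mem_gapCone (hx k₀) (hε _) hy (hcone k₀)
  have h2 := (lt_div_iff₀' hC).1 (hK k₀ hk₀K)
  linarith

theorem isConicalLimitSet_of_forall_notMem_gd {ι : Type*} [LinearOrder ι] [WellFoundedLT ι]
    {A : ι → Set V} (hA : Antitone A) {E : Set V} (hE : E.Countable)
    (h : ∀ x ∈ E, ∃ i, x ∈ A i ∧ x ∉ gd (A i)) : IsConicalLimitSet E := by
  choose r hr hgd using fun x : E => h x x.2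
  choose ε hε hgap using fun x : E => exists_gap_of_notMem_gd (hgd x)
  have : Countable E := hE.to_subtype
  obtain ⟨f, hf⟩ := exists_injective_nat E
  let w : E → ℝ := fun x => 1 / ((f x : ℝ) + 1)
  have hw : ∀ x, 0 < w x := fun x => Nat.one_div_pos_of_nat
  have hw0 : Tendsto w cofinite (𝓝 0) :=
    tendsto_one_div_add_atTop_nhds_zero_nat.comp (Nat.cofinite_eq_atTop ▸ hf.tendsto_cofinite)
  refine ⟨⋃ x : E, gapCone (A (r x)) x (ε x) (w x),
    Set.iUnion_subset fun x => gapCone_subset_upperHalf (hε x) (hw x),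
    (conicalLimitSet_iUnion_gapCone_subset hA hr hε hw hw0).antisymm fun x hx => ?_⟩
  exact conicalLimitSet_mono (Set.subset_iUnion (fun x : E => gapCone (A (r x)) x (ε x) (w x))
    ⟨x, hx⟩) (mem_conicalLimitSet_gapCone (hε _) (hw _) (hgap ⟨x, hx⟩))

end Backward

/-- A countable set `E ⊆ ℝ^m` is a conical limit set iff its transfinite `gd`-iteration
eventually becomes empty. -/
theorem countable_isConicalLimitSet_iff_gdIter_empty (m : ℕ) (hm : 1 ≤ m)
    (E : Set (EuclideanSpace ℝ (Fin m))) (hE : E.Countable) :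
    IsConicalLimitSet E ↔ ∃ χ : Ordinal, gdIter E χ = ∅ := by
  have : Nonempty (Fin m) := ⟨⟨0, hm⟩⟩
  refine ⟨fun h => h.exists_gdIter_eq_empty hE, fun ⟨_, hχ⟩ => ?_⟩
  exact isConicalLimitSet_of_forall_notMem_gd (gdIter_antitone E) hE
    fun _ hx => exists_mem_gdIter_notMem_gd E hx hχ
end

section
/- Let m ≥ 1 and let (t_n, v_n) be a sequence of points in the upper half-space H with t_n → 0 as n → ∞ (a standard sequence). Let Λ ⊆ ℝ^m be the set of subsequential limits of the sequence (v_n), and let Λc be the conical limit set of the set {(t_n, v_n) : n ∈ ℕ}. Then the interior of Λ is contained in the closure of Λc; moreover, if Λ has nonempty interior, then Λc is uncountable. -/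
open Filter Topology Metric

namespace ConicalAux

variable {V : Type*} [NormedAddCommGroup V] [NormedSpace ℝ V]

def Lam (w : ℕ → ℝ × V) : Set V :=
  {x | ∃ φ : ℕ → ℕ, StrictMono φ ∧ Tendsto (fun k => (w (φ k)).2) atTop (𝓝 x)}

lemma lam_approx {w : ℕ → ℝ × V} (ht : Tendsto (fun n => (w n).1) atTop (𝓝 (0:ℝ)))
    {y : V} (hy : y ∈ Lam w) {δ : ℝ} (hδ : 0 < δ) (N : ℕ) :
    ∃ n, N ≤ n ∧ ‖(w n).2 - y‖ ≤ δ ∧ (w n).1 ≤ δ := by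
  obtain ⟨φ, hφ, hconv⟩ := hy
  have h1 : ∀ᶠ k in atTop, dist (w (φ k)).2 y < δ := (Metric.tendsto_nhds.mp hconv) δ hδ
  have h2 : Tendsto (fun k => (w (φ k)).1) atTop (𝓝 (0:ℝ)) := ht.comp hφ.tendsto_atTop
  have h3 : ∀ᶠ k in atTop, |(w (φ k)).1| < δ := by
    have := (Metric.tendsto_nhds.mp h2) δ hδ
    simpa [Real.dist_eq] using this
  obtain ⟨k, hk1, hk2, hkN⟩ := (h1.and (h3.and (eventually_ge_atTop N))).exists
  refine ⟨φ k, le_trans hkN hφ.le_apply, ?_, ?_⟩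
  · rw [← dist_eq_norm]; exact hk1.le
  · exact (le_abs_self _).trans hk2.le

lemma exists_next {w : ℕ → ℝ × V} (hpos : ∀ n, 0 < (w n).1)
    (ht : Tendsto (fun n => (w n).1) atTop (𝓝 (0:ℝ)))
    {y : V} {r : ℝ} (hr : 0 < r) (hy : y ∈ Lam w) (n : ℕ) :
    ∃ p : ℕ × ℝ, n < p.1 ∧ 0 < p.2 ∧ p.2 ≤ r / 8 ∧ p.2 ≤ (w p.1).1 ∧
      (w p.1).1 ≤ r / 8 ∧ ‖(w p.1).2 - y‖ ≤ r / 8 := by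
  obtain ⟨n', hn', hv, htle⟩ := lam_approx ht hy (by positivity : (0:ℝ) < r/8) (n+1)
  exact ⟨(n', min (r/8) (w n').1), hn', lt_min (by positivity) (hpos n'),
    min_le_left _ _, min_le_right _ _, htle, hv⟩

variable (w : ℕ → ℝ × V)

open scoped Classical in
noncomputable def step (hpos : ∀ n, 0 < (w n).1)
    (ht : Tendsto (fun n => (w n).1) atTop (𝓝 (0:ℝ))) (e : V)
    (p : V × ℝ × ℕ) (b : Bool) : V × ℝ × ℕ :=
  if h : 0 < p.2.1 ∧ Metric.closedBall p.1 p.2.1 ⊆ Lam w then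
    let q := Classical.choose (exists_next hpos ht h.1
      (h.2 (Metric.mem_closedBall_self h.1.le)) p.2.2)
    ((w q.1).2 + (4 * q.2) • (cond b e (-e)), q.2, q.1)
  else p

variable {w}

lemma step_spec (hpos : ∀ n, 0 < (w n).1)
    (ht : Tendsto (fun n => (w n).1) atTop (𝓝 (0:ℝ))) {e : V} (he : ‖e‖ = 1)
    {p : V × ℝ × ℕ} (h1 : 0 < p.2.1) (h2 : Metric.closedBall p.1 p.2.1 ⊆ Lam w) (b : Bool) :
    0 < (step w hpos ht e p b).2.1 ∧
    (step w hpos ht e p b).2.1 ≤ p.2.1 / 8 ∧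
    p.2.2 < (step w hpos ht e p b).2.2 ∧
    (step w hpos ht e p b).2.1 ≤ (w (step w hpos ht e p b).2.2).1 ∧
    (w (step w hpos ht e p b).2.2).1 ≤ p.2.1 / 8 ∧
    Metric.closedBall (step w hpos ht e p b).1 (step w hpos ht e p b).2.1
      ⊆ Metric.closedBall p.1 p.2.1 ∧
    (∀ z, z ∈ Metric.closedBall (step w hpos ht e p b).1 (step w hpos ht e p b).2.1 →
       ‖(w (step w hpos ht e p b).2.2).2 - z‖ ≤ 5 * (w (step w hpos ht e p b).2.2).1) ∧
    (∀ z z', z ∈ Metric.closedBall (step w hpos ht e p true).1 (step w hpos ht e p true).2.1 →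
       z' ∈ Metric.closedBall (step w hpos ht e p false).1 (step w hpos ht e p false).2.1 →
       z ≠ z') := by
  have hcond : 0 < p.2.1 ∧ Metric.closedBall p.1 p.2.1 ⊆ Lam w := ⟨h1, h2⟩
  have hstep : ∀ b', step w hpos ht e p b' =
      (let q := Classical.choose (exists_next hpos ht hcond.1
        (hcond.2 (Metric.mem_closedBall_self hcond.1.le)) p.2.2)
       ((w q.1).2 + (4 * q.2) • (cond b' e (-e)), q.2, q.1)) := by
    intro b'; rw [step, dif_pos hcond]
  obtain ⟨hqn, hqr, hqr8, hqrt, hqt8, hqv⟩ := Classical.choose_spec (exists_next hpos ht hcond.1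
    (hcond.2 (Metric.mem_closedBall_self hcond.1.le)) p.2.2)
  set q := Classical.choose (exists_next hpos ht hcond.1
    (hcond.2 (Metric.mem_closedBall_self hcond.1.le)) p.2.2) with hq
  have hq2 : (0:ℝ) ≤ q.2 := hqr.le
  have hnormcond : ∀ b' : Bool, ‖cond b' e (-e)‖ = 1 := by
    intro b'; cases b' <;> simp [he]
  have hcenter : ∀ b' : Bool, ‖((w q.1).2 + (4 * q.2) • (cond b' e (-e))) - (w q.1).2‖
      = 4 * q.2 := by
    intro b'
    rw [add_sub_cancel_left, norm_smul, hnormcond, mul_one,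
      Real.norm_eq_abs, abs_of_nonneg (by linarith : (0:ℝ) ≤ 4 * q.2)]
  rw [hstep b]
  refine ⟨hqr, hqr8, hqn, hqrt, hqt8, ?_, ?_, ?_⟩
  · intro z hz
    simp only [Metric.mem_closedBall] at hz ⊢
    have d1 : dist z ((w q.1).2) ≤ q.2 + 4 * q.2 := by
      calc dist z ((w q.1).2) ≤ dist z ((w q.1).2 + (4 * q.2) • (cond b e (-e)))
            + dist ((w q.1).2 + (4 * q.2) • (cond b e (-e))) ((w q.1).2) := dist_triangle _ _ _
        _ ≤ q.2 + 4 * q.2 := by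
            rw [dist_eq_norm (((w q.1).2 + _))]
            exact add_le_add hz (le_of_eq (hcenter b))
    calc dist z p.1 ≤ dist z ((w q.1).2) + dist ((w q.1).2) p.1 := dist_triangle _ _ _
      _ ≤ (q.2 + 4 * q.2) + p.2.1/8 := by
          refine add_le_add d1 ?_
          rw [dist_eq_norm]; exact hqv
      _ ≤ (p.2.1/8 + 4 * (p.2.1/8)) + p.2.1/8 := by nlinarith
      _ ≤ p.2.1 := by linarith
  · intro z hz
    simp only [Metric.mem_closedBall] at hz
    calc ‖(w q.1).2 - z‖ ≤ ‖(w q.1).2 - ((w q.1).2 + (4 * q.2) • (cond b e (-e)))‖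
          + ‖((w q.1).2 + (4 * q.2) • (cond b e (-e))) - z‖ := norm_sub_le_norm_sub_add_norm_sub _ _ _
      _ ≤ 4 * q.2 + q.2 := by
          refine add_le_add ?_ ?_
          · rw [norm_sub_rev]; exact (hcenter b).le
          · rw [← dist_eq_norm, dist_comm]; exact hz
      _ = 5 * q.2 := by ring
      _ ≤ 5 * (w q.1).1 := by linarith
  · intro z z' hz hz' hzz'
    rw [hstep true] at hz; rw [hstep false] at hz'
    simp only [Metric.mem_closedBall, Bool.cond_true, Bool.cond_false] at hz hz'
    subst hzz'
    have hd : dist ((w q.1).2 + (4 * q.2) • e) ((w q.1).2 + (4 * q.2) • (-e)) = 8 * q.2 := by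
      rw [dist_eq_norm]
      have : ((w q.1).2 + (4 * q.2) • e) - ((w q.1).2 + (4 * q.2) • (-e)) = (8 * q.2) • e := by
        rw [smul_neg]; module
      rw [this, norm_smul, he, mul_one, Real.norm_eq_abs, abs_of_nonneg (by linarith : (0:ℝ) ≤ 8 * q.2)]
    have : (8:ℝ) * q.2 ≤ 2 * q.2 := by
      calc (8:ℝ) * q.2 = dist ((w q.1).2 + (4 * q.2) • e) ((w q.1).2 + (4 * q.2) • (-e)) := hd.symm
        _ ≤ dist ((w q.1).2 + (4 * q.2) • e) z + dist z ((w q.1).2 + (4 * q.2) • (-e)) :=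
            dist_triangle _ _ _
        _ ≤ 2 * q.2 := by
            rw [dist_comm ((w q.1).2 + (4 * q.2) • e) z]
            linarith
    linarith



variable (w) in
noncomputable def node (hpos : ∀ n, 0 < (w n).1)
    (ht : Tendsto (fun n => (w n).1) atTop (𝓝 (0:ℝ))) (e : V) (y₀ : V) (r₀ : ℝ) :
    List Bool → V × ℝ × ℕ
  | [] => (y₀, r₀, 0)
  | b :: l => step w hpos ht e (node hpos ht e y₀ r₀ l) b

lemma node_good (hpos : ∀ n, 0 < (w n).1)
    (ht : Tendsto (fun n => (w n).1) atTop (𝓝 (0:ℝ))) {e : V} (he : ‖e‖ = 1)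
    {y₀ : V} {r₀ : ℝ} (hr₀ : 0 < r₀) (hball : Metric.closedBall y₀ r₀ ⊆ Lam w) :
    ∀ l : List Bool, 0 < (node w hpos ht e y₀ r₀ l).2.1 ∧
      Metric.closedBall (node w hpos ht e y₀ r₀ l).1 (node w hpos ht e y₀ r₀ l).2.1 ⊆ Lam w := by
  intro l
  induction l with
  | nil => exact ⟨hr₀, hball⟩
  | cons b l ih =>
    obtain ⟨ih1, ih2⟩ := ih
    obtain ⟨s1, _, _, _, _, s6, _, _⟩ := step_spec hpos ht he ih1 ih2 b
    exact ⟨s1, s6.trans ih2⟩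

def listOf (σ : ℕ → Bool) : ℕ → List Bool
  | 0 => []
  | k + 1 => σ k :: listOf σ k

lemma listOf_congr {σ σ' : ℕ → Bool} : ∀ k, (∀ j, j < k → σ j = σ' j) →
    listOf σ k = listOf σ' k
  | 0, _ => rfl
  | k + 1, h => by
      simp only [listOf]
      rw [h k (Nat.lt_succ_self k), listOf_congr k (fun j hj => h j (hj.trans (Nat.lt_succ_self k)))]

lemma main [CompleteSpace V] {w : ℕ → ℝ × V} (hpos : ∀ n, 0 < (w n).1)
    (ht : Tendsto (fun n => (w n).1) atTop (𝓝 (0:ℝ))) {e : V} (he : ‖e‖ = 1)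
    {y₀ : V} {r₀ : ℝ} (hr₀ : 0 < r₀) (hball : Metric.closedBall y₀ r₀ ⊆ Lam w) :
    ∃ f : (ℕ → Bool) → V, Function.Injective f ∧
      ∀ σ, f σ ∈ conicalLimitSet (Set.range w) ∧ f σ ∈ Metric.closedBall y₀ r₀ := by
  classical
  set P : (ℕ → Bool) → ℕ → V × ℝ × ℕ :=
    fun σ k => node w hpos ht e y₀ r₀ (listOf σ k) with hP
  have hG : ∀ σ k, 0 < (P σ k).2.1 ∧
      Metric.closedBall (P σ k).1 (P σ k).2.1 ⊆ Lam w :=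
    fun σ k => node_good hpos ht he hr₀ hball _
  have hPsucc : ∀ σ k, P σ (k+1) = step w hpos ht e (P σ k) (σ k) := fun σ k => rfl
  -- per-level specs
  have spec : ∀ σ k,
      0 < (P σ (k+1)).2.1 ∧
      (P σ (k+1)).2.1 ≤ (P σ k).2.1 / 8 ∧
      (P σ k).2.2 < (P σ (k+1)).2.2 ∧
      (P σ (k+1)).2.1 ≤ (w (P σ (k+1)).2.2).1 ∧
      (w (P σ (k+1)).2.2).1 ≤ (P σ k).2.1 / 8 ∧
      Metric.closedBall (P σ (k+1)).1 (P σ (k+1)).2.1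
        ⊆ Metric.closedBall (P σ k).1 (P σ k).2.1 ∧
      (∀ z, z ∈ Metric.closedBall (P σ (k+1)).1 (P σ (k+1)).2.1 →
        ‖(w (P σ (k+1)).2.2).2 - z‖ ≤ 5 * (w (P σ (k+1)).2.2).1) := by
    intro σ k
    obtain ⟨s1, s2, s3, s4, s5, s6, s7, _⟩ :=
      step_spec hpos ht he (hG σ k).1 (hG σ k).2 (σ k)
    rw [hPsucc σ k]
    exact ⟨s1, s2, s3, s4, s5, s6, s7⟩
  -- radius decay
  have hrle : ∀ σ k, (P σ k).2.1 ≤ r₀ * (1/2)^k := by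
    intro σ k
    induction k with
    | zero => simp [hP, listOf, node]
    | succ k ih =>
      have h1 := (spec σ k).2.1
      have h2 := (hG σ k).1
      calc (P σ (k+1)).2.1 ≤ (P σ k).2.1 / 8 := h1
        _ ≤ (r₀ * (1/2)^k) / 2 := by linarith
        _ = r₀ * (1/2)^(k+1) := by ring
  -- nested balls
  have hnest : ∀ σ k j, k ≤ j →
      Metric.closedBall (P σ j).1 (P σ j).2.1 ⊆ Metric.closedBall (P σ k).1 (P σ k).2.1 := by
    intro σ k j hkj
    induction j, hkj using Nat.le_induction with
    | base => exact subset_rfl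
    | succ j hkj ih => exact ((spec σ j).2.2.2.2.2.1).trans ih
  have hmem : ∀ σ k j, k ≤ j → (P σ j).1 ∈ Metric.closedBall (P σ k).1 (P σ k).2.1 :=
    fun σ k j hkj => hnest σ k j hkj (Metric.mem_closedBall_self (hG σ j).1.le)
  -- Cauchy and limit
  have hcauchy : ∀ σ, CauchySeq (fun k => (P σ k).1) := by
    intro σ
    refine cauchySeq_of_le_geometric (1/2) r₀ (by norm_num) (fun k => ?_)
    have := hmem σ k (k+1) (Nat.le_succ k)
    rw [Metric.mem_closedBall] at this
    rw [dist_comm]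
    exact this.trans (hrle σ k)
  have hlim : ∀ σ, ∃ x, Tendsto (fun k => (P σ k).1) atTop (𝓝 x) :=
    fun σ => cauchySeq_tendsto_of_complete (hcauchy σ)
  choose f hf using hlim
  have hfball : ∀ σ k, f σ ∈ Metric.closedBall (P σ k).1 (P σ k).2.1 := by
    intro σ k
    refine Metric.isClosed_closedBall.mem_of_tendsto (hf σ) ?_
    filter_upwards [eventually_ge_atTop k] with j hj
    exact hmem σ k j hj
  have hgeo : Tendsto (fun k : ℕ => r₀ * (1/2:ℝ)^k) atTop (𝓝 0) := by
    have := (tendsto_pow_atTop_nhds_zero_of_lt_one (by norm_num : (0:ℝ) ≤ 1/2)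
      (by norm_num : (1/2:ℝ) < 1)).const_mul r₀
    simpa using this
  refine ⟨f, ?_, fun σ => ⟨?_, ?_⟩⟩
  · -- injectivity
    intro σ σ' hff
    by_contra hne
    have hex : ∃ k, σ k ≠ σ' k := by
      by_contra h
      push_neg at h
      exact hne (funext h)
    set k₀ := Nat.find hex with hk₀
    have hdiff : σ k₀ ≠ σ' k₀ := Nat.find_spec hex
    have hpre : ∀ j, j < k₀ → σ j = σ' j := by
      intro j hj
      by_contra h
      exact Nat.find_min hex hj h
    have hPeq : P σ k₀ = P σ' k₀ := by
      simp only [hP]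
      rw [listOf_congr k₀ hpre]
    obtain ⟨_, _, _, _, _, _, _, s8⟩ :=
      step_spec hpos ht he (hG σ k₀).1 (hG σ k₀).2 true
    have h1 : f σ ∈ Metric.closedBall (step w hpos ht e (P σ k₀) (σ k₀)).1
        (step w hpos ht e (P σ k₀) (σ k₀)).2.1 := by
      have := hfball σ (k₀+1); rwa [hPsucc σ k₀] at this
    have h2 : f σ' ∈ Metric.closedBall (step w hpos ht e (P σ k₀) (σ' k₀)).1
        (step w hpos ht e (P σ k₀) (σ' k₀)).2.1 := by
      have := hfball σ' (k₀+1); rwa [hPsucc σ' k₀, ← hPeq] at this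
    rcases Bool.eq_false_or_eq_true (σ k₀) with hb | hb
    · have hb' : σ' k₀ = false := by
        rw [hb] at hdiff; simpa using (Ne.symm hdiff)
      rw [hb] at h1; rw [hb'] at h2
      exact s8 (f σ) (f σ') h1 h2 hff
    · have hb' : σ' k₀ = true := by
        rw [hb] at hdiff; simpa using (Ne.symm hdiff)
      rw [hb] at h1; rw [hb'] at h2
      exact s8 (f σ') (f σ) h2 h1 hff.symm
  · -- conical limit point
    refine ⟨5, by norm_num, fun k => w ((P σ (k+1)).2.2), fun k => Set.mem_range_self _, ?_, ?_, ?_⟩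
    · -- t → 0
      refine squeeze_zero (fun k => (hpos _).le) (fun k => ?_) hgeo
      calc (w ((P σ (k+1)).2.2)).1 ≤ (P σ k).2.1 / 8 := (spec σ k).2.2.2.2.1
        _ ≤ (P σ k).2.1 := by have := (hG σ k).1; linarith
        _ ≤ r₀ * (1/2)^k := hrle σ k
    · -- v → f σ
      rw [tendsto_iff_dist_tendsto_zero]
      have hbnd : ∀ k, dist (w ((P σ (k+1)).2.2)).2 (f σ) ≤ 5 * (r₀ * (1/2:ℝ)^k) := by
        intro k
        rw [dist_eq_norm]
        calc ‖(w ((P σ (k+1)).2.2)).2 - f σ‖ ≤ 5 * (w ((P σ (k+1)).2.2)).1 :=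
              (spec σ k).2.2.2.2.2.2 (f σ) (hfball σ (k+1))
          _ ≤ 5 * (r₀ * (1/2)^k) := by
              have h1 := (spec σ k).2.2.2.2.1
              have h2 := (hG σ k).1
              have h3 := hrle σ k
              nlinarith
      exact squeeze_zero (fun k => dist_nonneg) hbnd (by simpa using hgeo.const_mul (5:ℝ))
    · -- cone condition
      intro k
      exact (spec σ k).2.2.2.2.2.2 (f σ) (hfball σ (k+1))
  · -- in the initial ball
    have := hfball σ 0
    simpa [hP, listOf, node] using this

end ConicalAux

/-- For a standard sequence `(t_n, v_n)` in the upper half-space (`t_n > 0`, `t_n → 0`),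
the interior of the set `Λ` of subsequential limits of `(v_n)` is contained in the closure
of the conical limit set `Λc`; moreover if `Λ` has nonempty interior then `Λc` is
uncountable. -/
theorem interior_limitSet_subset_closure_conicalLimitSet (m : ℕ) (hm : 1 ≤ m)
    (w : ℕ → ℝ × EuclideanSpace ℝ (Fin m))
    (hpos : ∀ n, 0 < (w n).1)
    (ht : Tendsto (fun n => (w n).1) atTop (𝓝 (0 : ℝ))) :
    interior {x : EuclideanSpace ℝ (Fin m) | ∃ φ : ℕ → ℕ, StrictMono φ ∧
        Tendsto (fun k => (w (φ k)).2) atTop (𝓝 x)}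
      ⊆ closure (conicalLimitSet (Set.range w)) ∧
    ((interior {x : EuclideanSpace ℝ (Fin m) | ∃ φ : ℕ → ℕ, StrictMono φ ∧
        Tendsto (fun k => (w (φ k)).2) atTop (𝓝 x)}).Nonempty →
      ¬ (conicalLimitSet (Set.range w)).Countable) := by
  classical
  set Λ := {x : EuclideanSpace ℝ (Fin m) | ∃ φ : ℕ → ℕ, StrictMono φ ∧
      Tendsto (fun k => (w (φ k)).2) atTop (𝓝 x)} with hΛ
  set e : EuclideanSpace ℝ (Fin m) := EuclideanSpace.single (⟨0, hm⟩ : Fin m) (1:ℝ) with he_def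
  have he : ‖e‖ = 1 := by simp [he_def, EuclideanSpace.norm_single]
  have key : ∀ x ∈ interior Λ, ∀ ε > 0, ∃ y ∈ conicalLimitSet (Set.range w), dist x y ≤ ε := by
    intro x hx ε hε
    obtain ⟨ε₀, hε₀, hball⟩ := Metric.isOpen_iff.mp isOpen_interior x hx
    set r := min (ε₀/2) ε with hr
    have hrpos : 0 < r := lt_min (by linarith) hε
    have hsub : Metric.closedBall x r ⊆ ConicalAux.Lam w := by
      intro z hz
      rw [Metric.mem_closedBall] at hz
      have hz' : z ∈ Metric.ball x ε₀ := by
        rw [Metric.mem_ball]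
        calc dist z x ≤ r := hz
          _ ≤ ε₀/2 := min_le_left _ _
          _ < ε₀ := by linarith
      exact interior_subset (hball hz')
    obtain ⟨f, hinj, hf⟩ := ConicalAux.main hpos ht he hrpos hsub
    refine ⟨f (fun _ => true), (hf _).1, ?_⟩
    have hfb := (hf (fun _ => true)).2
    rw [Metric.mem_closedBall] at hfb
    rw [dist_comm]
    exact hfb.trans (min_le_right _ _)
  constructor
  · intro x hx
    rw [Metric.mem_closure_iff]
    intro ε hε
    obtain ⟨y, hy, hxy⟩ := key x hx (ε/2) (by linarith)
    exact ⟨y, hy, lt_of_le_of_lt hxy (by linarith)⟩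
  · rintro ⟨x, hx⟩ hcount
    obtain ⟨ε₀, hε₀, hball⟩ := Metric.isOpen_iff.mp isOpen_interior x hx
    have hsub : Metric.closedBall x (ε₀/2) ⊆ ConicalAux.Lam w := by
      intro z hz
      rw [Metric.mem_closedBall] at hz
      exact interior_subset (hball (by rw [Metric.mem_ball]; linarith))
    obtain ⟨f, hinj, hf⟩ := ConicalAux.main hpos ht he (by linarith) hsub
    have hc : Countable (ℕ → Bool) := by
      have hsc : Countable ↥(conicalLimitSet (Set.range w)) := hcount.to_subtype
      have hinj' : Function.Injective
          (fun σ => (⟨f σ, (hf σ).1⟩ : ↥(conicalLimitSet (Set.range w)))) :=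
        fun a b hab => hinj (by simpa using congrArg Subtype.val hab)
      exact hinj'.countable
    obtain ⟨g, hg⟩ := exists_surjective_nat (ℕ → Bool)
    obtain ⟨n, hn⟩ := hg (fun k => !(g k k))
    have hd := congrFun hn n
    simp at hd
end

section
/- Let m, n ≥ 1, let E₁ ⊆ ℝ^m and E₂ ⊆ ℝ^n, and identify ℝ^{m+n} with the Euclidean product ℝ^m × ℝ^n. Then gd(E₁ × E₂) = gd(E₁) × gd(E₂), where on each space gd is taken with respect to the Euclidean norm of that space. -/
open Filter Topology

lemma gd_close {V : Type*} [NormedAddCommGroup V] [NormedSpace ℝ V] {E : Set V} {z : V}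
    (hu : ∃ u : V, u ≠ 0) (hz : z ∈ gd E) : ∀ r > 0, ∃ x ∈ E, ‖x - z‖ < r := by
  obtain ⟨u, hu⟩ := hu
  intro r rpos
  obtain ⟨δ, δpos, H⟩ := hz 1 one_pos
  set c : ℝ := min (r / 3) (δ / 2) with hc
  have cpos : 0 < c := lt_min (by linarith) (by linarith)
  have hun : ‖u‖ ≠ 0 := norm_ne_zero_iff.mpr hu
  set v : V := z + (c * ‖u‖⁻¹) • u with hv
  have hnv : ‖v - z‖ = c := by
    rw [hv, add_sub_cancel_left, norm_smul, Real.norm_eq_abs,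
      abs_of_pos (by positivity), mul_assoc, inv_mul_cancel₀ hun, mul_one]
  obtain ⟨x, hxE, hx⟩ := H v (by rw [hnv]; exact cpos)
    (by rw [hnv]; exact lt_of_le_of_lt (min_le_right _ _) (by linarith))
  refine ⟨x, hxE, ?_⟩
  have hc3 : c ≤ r / 3 := min_le_left _ _
  rw [hnv, one_mul] at hx
  calc ‖x - z‖ ≤ ‖x - v‖ + ‖v - z‖ := norm_sub_le_norm_sub_add_norm_sub x v z
    _ < c + c := by rw [hnv]; linarith
    _ < r := by linarith

lemma fst_le' {α β : Type*} [NormedAddCommGroup α] [NormedAddCommGroup β]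
    (x : WithLp 2 (α × β)) : ‖x.fst‖ ≤ ‖x‖ := by
  have h := WithLp.prod_norm_sq_eq_of_L2 x
  nlinarith [norm_nonneg x, norm_nonneg x.fst, norm_nonneg x.snd, sq_nonneg ‖x.snd‖]

lemma snd_le' {α β : Type*} [NormedAddCommGroup α] [NormedAddCommGroup β]
    (x : WithLp 2 (α × β)) : ‖x.snd‖ ≤ ‖x‖ := by
  have h := WithLp.prod_norm_sq_eq_of_L2 x
  nlinarith [norm_nonneg x, norm_nonneg x.fst, norm_nonneg x.snd, sq_nonneg ‖x.fst‖]

/-- Good points of a Cartesian product (with respect to the Euclidean norm on the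
`L²`-product `ℝ^m × ℝ^n ≅ ℝ^(m+n)`): `gd (E₁ × E₂) = gd E₁ × gd E₂`. -/
theorem gd_prod (m n : ℕ) (hm : 1 ≤ m) (hn : 1 ≤ n)
    (E₁ : Set (EuclideanSpace ℝ (Fin m))) (E₂ : Set (EuclideanSpace ℝ (Fin n))) :
    gd ((WithLp.equiv 2 (EuclideanSpace ℝ (Fin m) × EuclideanSpace ℝ (Fin n))).symm ''
        (E₁ ×ˢ E₂))
      = (WithLp.equiv 2 (EuclideanSpace ℝ (Fin m) × EuclideanSpace ℝ (Fin n))).symm ''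
        (gd E₁ ×ˢ gd E₂) := by
  let V := EuclideanSpace ℝ (Fin m)
  let W := EuclideanSpace ℝ (Fin n)
  set e := WithLp.equiv 2 (V × W) with he
  have himg : ∀ (S₁ : Set V) (S₂ : Set W) (z : WithLp 2 (V × W)),
      z ∈ e.symm '' (S₁ ×ˢ S₂) ↔ z.fst ∈ S₁ ∧ z.snd ∈ S₂ := by
    intro S₁ S₂ z
    rw [Equiv.image_eq_preimage_symm, Equiv.symm_symm, Set.mem_preimage, Set.mem_prod]
    rfl
  ext z
  rw [himg]
  constructor
  · -- forward
    intro hz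
    constructor
    · intro ε εpos
      obtain ⟨δ, δpos, H⟩ := hz ε εpos
      refine ⟨δ, δpos, fun v₁ h1 h2 => ?_⟩
      set v : WithLp 2 (V × W) := e.symm (v₁, z.snd) with hv
      have hvz : ‖v - z‖ = ‖v₁ - z.fst‖ := by
        have h2' : (v - z).snd = 0 := sub_self _
        have h1' : (v - z).fst = v₁ - z.fst := rfl
        have := WithLp.prod_norm_sq_eq_of_L2 (v - z)
        rw [h1', h2', norm_zero] at this
        nlinarith [norm_nonneg (v - z), norm_nonneg (v₁ - z.fst)]
      obtain ⟨x, hxE, hx⟩ := H v (by rw [hvz]; exact h1) (by rw [hvz]; exact h2)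
      rw [himg] at hxE
      refine ⟨x.fst, hxE.1, ?_⟩
      calc ‖x.fst - v₁‖ = ‖(x - v).fst‖ := rfl
        _ ≤ ‖x - v‖ := fst_le' _
        _ < ε * ‖v - z‖ := hx
        _ = ε * ‖v₁ - z.fst‖ := by rw [hvz]
    · intro ε εpos
      obtain ⟨δ, δpos, H⟩ := hz ε εpos
      refine ⟨δ, δpos, fun v₂ h1 h2 => ?_⟩
      set v : WithLp 2 (V × W) := e.symm (z.fst, v₂) with hv
      have hvz : ‖v - z‖ = ‖v₂ - z.snd‖ := by
        have h2' : (v - z).fst = 0 := sub_self _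
        have h1' : (v - z).snd = v₂ - z.snd := rfl
        have := WithLp.prod_norm_sq_eq_of_L2 (v - z)
        rw [h1', h2', norm_zero] at this
        nlinarith [norm_nonneg (v - z), norm_nonneg (v₂ - z.snd)]
      obtain ⟨x, hxE, hx⟩ := H v (by rw [hvz]; exact h1) (by rw [hvz]; exact h2)
      rw [himg] at hxE
      refine ⟨x.snd, hxE.2, ?_⟩
      calc ‖x.snd - v₂‖ = ‖(x - v).snd‖ := rfl
        _ ≤ ‖x - v‖ := snd_le' _
        _ < ε * ‖v - z‖ := hx
        _ = ε * ‖v₂ - z.snd‖ := by rw [hvz]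
  · -- backward
    rintro ⟨hz1, hz2⟩ ε εpos
    have hε' : 0 < ε / 2 := by linarith
    obtain ⟨δ₁, δ₁pos, H₁⟩ := hz1 (ε / 2) hε'
    obtain ⟨δ₂, δ₂pos, H₂⟩ := hz2 (ε / 2) hε'
    have hu₁ : ∃ u : V, u ≠ 0 :=
      ⟨EuclideanSpace.single ⟨0, hm⟩ (1 : ℝ), by
        intro h
        have h1 := EuclideanSpace.norm_single (𝕜 := ℝ) (⟨0, hm⟩ : Fin m) 1
        rw [h, norm_zero] at h1
        norm_num at h1⟩
    have hu₂ : ∃ u : W, u ≠ 0 :=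
      ⟨EuclideanSpace.single ⟨0, hn⟩ (1 : ℝ), by
        intro h
        have h1 := EuclideanSpace.norm_single (𝕜 := ℝ) (⟨0, hn⟩ : Fin n) 1
        rw [h, norm_zero] at h1
        norm_num at h1⟩
    refine ⟨min δ₁ δ₂, lt_min δ₁pos δ₂pos, fun v h1 h2 => ?_⟩
    have ht : 0 < ‖v - z‖ := h1
    -- first coordinate
    have hx₁ : ∃ x₁ ∈ E₁, ‖x₁ - v.fst‖ < ε / 2 * ‖v - z‖ := by
      rcases eq_or_lt_of_le (norm_nonneg (v.fst - z.fst)) with hzero | hpos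
      · have hvf : v.fst = z.fst := by
          have := (norm_eq_zero.mp hzero.symm)
          exact sub_eq_zero.mp this
        obtain ⟨x₁, hx₁E, hx₁⟩ := gd_close hu₁ hz1 (ε / 2 * ‖v - z‖) (by positivity)
        exact ⟨x₁, hx₁E, by rw [hvf]; exact hx₁⟩
      · have hle : ‖v.fst - z.fst‖ ≤ ‖v - z‖ := fst_le' (v - z)
        obtain ⟨x₁, hx₁E, hx₁⟩ := H₁ v.fst hpos
          (lt_of_le_of_lt hle (lt_of_lt_of_le h2 (min_le_left _ _)))
        exact ⟨x₁, hx₁E, lt_of_lt_of_le hx₁ (by nlinarith)⟩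
    have hx₂ : ∃ x₂ ∈ E₂, ‖x₂ - v.snd‖ < ε / 2 * ‖v - z‖ := by
      rcases eq_or_lt_of_le (norm_nonneg (v.snd - z.snd)) with hzero | hpos
      · have hvf : v.snd = z.snd := sub_eq_zero.mp (norm_eq_zero.mp hzero.symm)
        obtain ⟨x₂, hx₂E, hx₂⟩ := gd_close hu₂ hz2 (ε / 2 * ‖v - z‖) (by positivity)
        exact ⟨x₂, hx₂E, by rw [hvf]; exact hx₂⟩
      · have hle : ‖v.snd - z.snd‖ ≤ ‖v - z‖ := snd_le' (v - z)
        obtain ⟨x₂, hx₂E, hx₂⟩ := H₂ v.snd hpos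
          (lt_of_le_of_lt hle (lt_of_lt_of_le h2 (min_le_right _ _)))
        exact ⟨x₂, hx₂E, lt_of_lt_of_le hx₂ (by nlinarith)⟩
    obtain ⟨x₁, hx₁E, hx₁⟩ := hx₁
    obtain ⟨x₂, hx₂E, hx₂⟩ := hx₂
    set x : WithLp 2 (V × W) := e.symm (x₁, x₂) with hx
    refine ⟨x, (himg E₁ E₂ x).mpr ⟨hx₁E, hx₂E⟩, ?_⟩
    have hsq := WithLp.prod_norm_sq_eq_of_L2 (x - v)
    have hf : (x - v).fst = x₁ - v.fst := rfl
    have hs : (x - v).snd = x₂ - v.snd := rfl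
    rw [hf, hs] at hsq
    have hlt : ‖x - v‖ ^ 2 < (ε * ‖v - z‖) ^ 2 := by
      nlinarith [norm_nonneg (x₁ - v.fst), norm_nonneg (x₂ - v.snd)]
    exact lt_of_pow_lt_pow_left₀ 2 (by positivity) hlt
end

section
/- Let m ≥ 1, let V be a nonempty open subset of ℝ^m with V ≠ ℝ^m, and let ε > 0. Then there exist a sequence of points (v_i) in V and a sequence of positive reals (t_i) such that: (i) V = ⋃_i B(v_i, t_i); (ii) t_i ≤ ε for all i; (iii) for every α > 0, each point of ℝ^m lies in B(v_i, α·t_i) for only finitely many indices i; and (iv) t_i / dist(v_i, ℝ^m \ V) → 0 as i → ∞. -/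
/-!
Fix `x₀` and exhaust `V` by the compact shells where `dist y x₀ ≈ n` or `dist(y, Vᶜ) ≈ 1/n`,
and cover the `n`-th shell by finitely many balls `B(c, min ε (dist(c, Vᶜ)/(n+2)))` centred in
it. Then `tᵢ / dist(vᵢ, Vᶜ) ≤ 1/(n+2) → 0`, and a compact subset of `V` meets only finitely many
shells, hence contains only finitely many centres. These two facts give the finiteness of the
dilated balls: away from `Vᶜ` a small dilated ball through `x` has its centre in a compact ball
around `x` inside `V`. The index set is infinite, so it can be enumerated by `ℕ`: a finite
union of closed balls inside `V` is closed, while `V` is not clopen in the connected `ℝ^m`.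
-/

open Filter Topology

open Metric Set

universe u

variable {E : Type u} [PseudoMetricSpace E]

section Exhaustion

variable (V : Set E) (x₀ : E)

/-- For `n = 0` the junk value `0⁻¹ = 0` is harmless: `dist y x₀ < 0` never holds. -/
def exhaustionOpen (n : ℕ) : Set E :=
  {y | dist y x₀ < n ∧ (n : ℝ)⁻¹ < infDist y Vᶜ}

def exhaustionCompact (n : ℕ) : Set E :=
  {y | dist y x₀ ≤ n + 1 ∧ ((n : ℝ) + 1)⁻¹ ≤ infDist y Vᶜ}

def exhaustionShell (n : ℕ) : Set E :=
  exhaustionCompact V x₀ n \ exhaustionOpen V x₀ n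

variable {V x₀}

theorem exhaustionOpen_zero : exhaustionOpen V x₀ 0 = ∅ :=
  eq_empty_of_forall_notMem fun _ hy => (not_lt.2 dist_nonneg) (by exact_mod_cast hy.1)

theorem isOpen_exhaustionOpen (n : ℕ) : IsOpen (exhaustionOpen V x₀ n) :=
  (isOpen_lt (continuous_id.dist continuous_const) continuous_const).inter
    (isOpen_lt continuous_const (continuous_infDist_pt _))

theorem exhaustionOpen_mono : Monotone (exhaustionOpen V x₀) := by
  intro n n' hn y ⟨hd, hδ⟩
  have hn_pos : (0 : ℝ) < n := dist_nonneg.trans_lt hd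
  have hnn' : (n : ℝ) ≤ n' := by exact_mod_cast hn
  exact ⟨hd.trans_le hnn', (inv_anti₀ hn_pos hnn').trans_lt hδ⟩

theorem exhaustionOpen_succ_subset (n : ℕ) :
    exhaustionOpen V x₀ (n + 1) ⊆ exhaustionCompact V x₀ n := fun _ ⟨hd, hδ⟩ => by
  push_cast at hd hδ
  exact ⟨hd.le, hδ.le⟩

theorem exists_mem_exhaustionOpen {y : E} (hy : 0 < infDist y Vᶜ) :
    ∃ n, y ∈ exhaustionOpen V x₀ n := by
  obtain ⟨n, hn⟩ := exists_nat_gt (max (dist y x₀) (infDist y Vᶜ)⁻¹)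
  have hn_pos : (0 : ℝ) < n := (dist_nonneg.trans (le_max_left _ _)).trans_lt hn
  refine ⟨n, (le_max_left _ _).trans_lt hn, ?_⟩
  rw [inv_lt_comm₀ hn_pos hy]
  exact (le_max_right _ _).trans_lt hn

theorem exhaustionCompact_subset (n : ℕ) : exhaustionCompact V x₀ n ⊆ V := fun y hy => by
  by_contra hyV
  have h0 : infDist y Vᶜ = 0 := infDist_zero_of_mem hyV
  have := hy.2
  rw [h0] at this
  exact (not_le.2 (by positivity : (0 : ℝ) < ((n : ℝ) + 1)⁻¹)) this

theorem isCompact_exhaustionCompact [ProperSpace E] (n : ℕ) :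
    IsCompact (exhaustionCompact V x₀ n) :=
  (isCompact_closedBall x₀ (n + 1)).of_isClosed_subset
    ((isClosed_le (continuous_id.dist continuous_const) continuous_const).inter
      (isClosed_le continuous_const (continuous_infDist_pt _)))
    fun _ hy => hy.1

theorem isCompact_exhaustionShell [ProperSpace E] (n : ℕ) :
    IsCompact (exhaustionShell V x₀ n) :=
  (isCompact_exhaustionCompact n).diff (isOpen_exhaustionOpen n)

theorem exhaustionShell_subset (n : ℕ) : exhaustionShell V x₀ n ⊆ V :=
  sdiff_subset.trans (exhaustionCompact_subset n)

theorem exists_mem_exhaustionShell {y : E} (hy : 0 < infDist y Vᶜ) :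
    ∃ n, y ∈ exhaustionShell V x₀ n := by
  classical
  have hex : ∃ n, y ∈ exhaustionOpen V x₀ (n + 1) := by
    obtain ⟨n, hn⟩ := exists_mem_exhaustionOpen (x₀ := x₀) hy
    exact ⟨n, exhaustionOpen_mono n.le_succ hn⟩
  refine ⟨Nat.find hex, exhaustionOpen_succ_subset _ (Nat.find_spec hex), ?_⟩
  cases h : Nat.find hex with
  | zero => simp [exhaustionOpen_zero]
  | succ k => exact Nat.find_min hex (h ▸ k.lt_succ_self)

theorem finite_setOf_exhaustionShell_inter_nonempty (hV : IsOpen V) (hVc : Vᶜ.Nonempty)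
    {K : Set E} (hK : IsCompact K) (hKV : K ⊆ V) :
    {n | (exhaustionShell V x₀ n ∩ K).Nonempty}.Finite := by
  obtain ⟨N, hN⟩ : ∃ N, K ⊆ exhaustionOpen V x₀ N :=
    hK.elim_directed_cover _ isOpen_exhaustionOpen
      (fun y hy => mem_iUnion.2 <| exists_mem_exhaustionOpen <|
        (hV.isClosed_compl.notMem_iff_infDist_pos hVc).1 (not_not_intro (hKV hy)))
      exhaustionOpen_mono.directed_le
  refine (finite_lt_nat N).subset fun n ⟨y, hy, hyK⟩ => ?_
  by_contra hn
  exact hy.2 (exhaustionOpen_mono (not_lt.1 hn) (hN hyK))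

end Exhaustion

/-- The conclusion in index-free form: `i → ∞` is the cofinite filter, and the finiteness of the
dilated balls through a point is replaced by the finiteness of the centres in each compact
subset of `V` (see `IsGoodBallCover.finite_setOf_mem_ball_mul`). -/
structure IsGoodBallCover (V : Set E) (ε : ℝ) {ι : Type*} (v : ι → E) (t : ι → ℝ) : Prop where
  pos : ∀ i, 0 < t i
  le : ∀ i, t i ≤ ε
  lt_infDist : ∀ i, t i < infDist (v i) Vᶜ
  subset_iUnion : V ⊆ ⋃ i, ball (v i) (t i)
  tendsto_div_infDist : Tendsto (fun i => t i / infDist (v i) Vᶜ) cofinite (𝓝 0)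
  finite_of_isCompact : ∀ K, IsCompact K → K ⊆ V → {i | v i ∈ K}.Finite

namespace IsGoodBallCover

variable {V : Set E} {ε : ℝ} {ι κ : Type*} {v : ι → E} {t : ι → ℝ}

theorem closedBall_subset (h : IsGoodBallCover V ε v t) (i : ι) : closedBall (v i) (t i) ⊆ V :=
  (closedBall_subset_ball (h.lt_infDist i)).trans ball_infDist_compl_subset

theorem mem (h : IsGoodBallCover V ε v t) (i : ι) : v i ∈ V :=
  h.closedBall_subset i (mem_closedBall_self (h.pos i).le)

theorem iUnion_ball_eq (h : IsGoodBallCover V ε v t) : ⋃ i, ball (v i) (t i) = V :=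
  (iUnion_subset fun i => ball_subset_closedBall.trans (h.closedBall_subset i)).antisymm
    h.subset_iUnion

theorem comp_equiv (h : IsGoodBallCover V ε v t) (e : κ ≃ ι) :
    IsGoodBallCover V ε (v ∘ e) (t ∘ e) where
  pos i := h.pos (e i)
  le i := h.le (e i)
  lt_infDist i := h.lt_infDist (e i)
  subset_iUnion := by
    simpa only [Function.comp_apply, e.surjective.iUnion_comp fun i => ball (v i) (t i)]
      using h.subset_iUnion
  tendsto_div_infDist := h.tendsto_div_infDist.comp e.injective.tendsto_cofinite
  finite_of_isCompact K hK hKV :=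
    (h.finite_of_isCompact K hK hKV).preimage (f := e) e.injective.injOn

theorem infinite [PreconnectedSpace E] (h : IsGoodBallCover V ε v t) (hV : IsOpen V)
    (hne : V.Nonempty) (hV_ne_univ : V ≠ univ) : Infinite ι := by
  by_contra hfin
  have : Finite ι := not_infinite_iff_finite.1 hfin
  have hV_eq : ⋃ i, closedBall (v i) (t i) = V :=
    (iUnion_subset h.closedBall_subset).antisymm
      (h.subset_iUnion.trans (iUnion_mono fun _ => ball_subset_closedBall))
  have hV_closed : IsClosed V := hV_eq ▸ isClosed_iUnion_of_finite fun _ => isClosed_closedBall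
  rcases isClopen_iff.1 ⟨hV_closed, hV⟩ with hV_empty | hV_univ
  · exact hne.ne_empty hV_empty
  · exact hV_ne_univ hV_univ

theorem finite_setOf_mem_ball_mul [ProperSpace E] (h : IsGoodBallCover V ε v t) {α : ℝ}
    (hα : 0 < α) (x : E) : {i | x ∈ ball (v i) (α * t i)}.Finite := by
  have hsmall : {i | ¬ 4 * α * t i < infDist (v i) Vᶜ}.Finite := by
    refine eventually_cofinite.1 ?_
    filter_upwards [h.tendsto_div_infDist.eventually
      (gt_mem_nhds (inv_pos.2 (by positivity : 0 < 4 * α)))] with i hi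
    have hδ : 0 < infDist (v i) Vᶜ := (h.pos i).trans (h.lt_infDist i)
    rw [div_lt_iff₀ hδ, ← div_eq_inv_mul, lt_div_iff₀ (by positivity)] at hi
    linarith
  have hnear : {i | x ∈ ball (v i) (α * t i)} ⊆
      {i | ¬ 4 * α * t i < infDist (v i) Vᶜ} ∪ {i | dist x (v i) < infDist x Vᶜ / 3} := by
    intro i (hi : dist x (v i) < α * t i)
    by_cases hlt : 4 * α * t i < infDist (v i) Vᶜ
    · have := infDist_le_infDist_add_dist (x := v i) (y := x) (s := Vᶜ)
      exact Or.inr (show dist x (v i) < infDist x Vᶜ / 3 by linarith [dist_comm x (v i)])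
    · exact Or.inl hlt
  refine (hsmall.union ?_).subset hnear
  rcases (infDist_nonneg (x := x) (s := Vᶜ)).eq_or_lt with h0 | hpos
  · exact finite_empty.subset fun i (hi : dist x (v i) < infDist x Vᶜ / 3) => by
      linarith [dist_nonneg (x := x) (y := v i)]
  · refine (h.finite_of_isCompact _ (isCompact_closedBall x (infDist x Vᶜ / 3)) ?_).subset
      fun i hi => mem_closedBall'.2 (le_of_lt hi)
    exact (closedBall_subset_ball (by linarith)).trans ball_infDist_compl_subset

end IsGoodBallCover

theorem exists_isGoodBallCover [ProperSpace E] {V : Set E} (hV : IsOpen V) (hVc : Vᶜ.Nonempty)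
    {ε : ℝ} (hε : 0 < ε) :
    ∃ (ι : Type u) (_ : Countable ι) (v : ι → E) (t : ι → ℝ), IsGoodBallCover V ε v t := by
  obtain ⟨x₀, -⟩ := id hVc
  have hδ : ∀ {y}, y ∈ V → 0 < infDist y Vᶜ := fun hy =>
    (hV.isClosed_compl.notMem_iff_infDist_pos hVc).1 (not_not_intro hy)
  set ρ : ℕ → E → ℝ := fun n y => min ε (infDist y Vᶜ / (n + 2))
  have hρ : ∀ {n y}, y ∈ exhaustionShell V x₀ n → 0 < ρ n y := fun hy =>
    lt_min hε (div_pos (hδ (exhaustionShell_subset _ hy)) (by positivity))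
  choose s hs_sub hs_cover using fun n =>
    (isCompact_exhaustionShell (V := V) (x₀ := x₀) n).elim_nhds_subcover
      (fun y => ball y (ρ n y)) fun y hy => ball_mem_nhds y (hρ hy)
  have hc : ∀ i : Σ n, s n, (i.2 : E) ∈ exhaustionShell V x₀ i.1 := fun i => hs_sub i.1 _ i.2.2
  have hδc : ∀ i : Σ n, s n, 0 < infDist (i.2 : E) Vᶜ := fun i =>
    hδ (exhaustionShell_subset _ (hc i))
  have hfiber : ∀ n, (Sigma.fst ⁻¹' {n} : Set (Σ n, s n)).Finite := fun n =>
    range_sigmaMk n ▸ finite_range _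
  have hratio : ∀ i : Σ n, s n, ρ i.1 i.2 / infDist (i.2 : E) Vᶜ ≤ ((i.1 : ℝ) + 2)⁻¹ := by
    intro i
    rw [div_le_iff₀ (hδc i), inv_mul_eq_div]
    exact min_le_right _ _
  have hlim : Tendsto (fun i : Σ n, s n => ((i.1 : ℝ) + 2)⁻¹) cofinite (𝓝 0) :=
    (tendsto_inv_atTop_zero.comp (tendsto_natCast_atTop_atTop.atTop_add tendsto_const_nhds)).comp
      (Nat.cofinite_eq_atTop ▸
        Tendsto.cofinite_of_finite_preimage_singleton fun n => (hfiber n).to_subtype)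
  refine ⟨Σ n, s n, inferInstance, fun i => i.2, fun i => ρ i.1 i.2,
    { pos := fun i => hρ (hc i)
      le := fun i => min_le_left _ _
      lt_infDist := fun i => (min_le_right _ _).trans_lt (div_lt_self (hδc i) (by linarith))
      subset_iUnion := fun y hy => ?_
      tendsto_div_infDist := squeeze_zero (fun i => (div_pos (hρ (hc i)) (hδc i)).le) hratio hlim
      finite_of_isCompact := fun K hK hKV => ?_ }⟩
  · obtain ⟨n, hyn⟩ := exists_mem_exhaustionShell (x₀ := x₀) (hδ hy)
    obtain ⟨c, hcs, hyc⟩ := mem_iUnion₂.1 (hs_cover n hyn)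
    exact mem_iUnion.2 ⟨⟨n, c, hcs⟩, hyc⟩
  · refine ((finite_setOf_exhaustionShell_inter_nonempty hV hVc hK hKV).preimage'
      fun n _ => hfiber n).subset fun i hi => ⟨i.2, hc i, hi⟩

theorem exists_isGoodBallCover_nat [ProperSpace E] [PreconnectedSpace E] {V : Set E}
    (hV : IsOpen V) (hne : V.Nonempty) (hV_ne_univ : V ≠ univ) {ε : ℝ} (hε : 0 < ε) :
    ∃ (v : ℕ → E) (t : ℕ → ℝ), IsGoodBallCover V ε v t := by
  obtain ⟨ι, _, v, t, h⟩ := exists_isGoodBallCover hV (nonempty_compl.2 hV_ne_univ) hε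
  have := h.infinite hV hne hV_ne_univ
  obtain ⟨_⟩ := nonempty_denumerable ι
  exact ⟨_, _, h.comp_equiv (Denumerable.eqv ι).symm⟩

theorem exists_good_ball_cover_general (m : ℕ)
    (V : Set (EuclideanSpace ℝ (Fin m))) (hV : IsOpen V) (hne : V.Nonempty)
    (hproper : V ≠ Set.univ) (ε : ℝ) (hε : 0 < ε) :
    ∃ (v : ℕ → EuclideanSpace ℝ (Fin m)) (t : ℕ → ℝ),
      (∀ i, v i ∈ V) ∧
      (∀ i, 0 < t i) ∧
      V = ⋃ i, Metric.ball (v i) (t i) ∧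
      (∀ i, t i ≤ ε) ∧
      (∀ α > 0, ∀ x : EuclideanSpace ℝ (Fin m),
        {i : ℕ | x ∈ Metric.ball (v i) (α * t i)}.Finite) ∧
      Tendsto (fun i => t i / Metric.infDist (v i) Vᶜ) atTop (𝓝 (0 : ℝ)) := by
  obtain ⟨v, t, h⟩ := exists_isGoodBallCover_nat hV hne hproper hε
  exact ⟨v, t, h.mem, h.pos, h.iUnion_ball_eq.symm, h.le,
    fun α hα x => h.finite_setOf_mem_ball_mul hα x,
    Nat.cofinite_eq_atTop ▸ h.tendsto_div_infDist⟩

/-- Covering lemma: a nonempty proper open subset `V` of `ℝ^m` can be covered by a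
sequence of balls `B(v_i, t_i)` with `v_i ∈ V`, radii at most `ε`, such that for every
`α > 0` each point lies in only finitely many of the dilated balls `B(v_i, α t_i)`, and
`t_i / dist(v_i, ℝ^m \ V) → 0`. -/
theorem exists_good_ball_cover (m : ℕ) (hm : 1 ≤ m)
    (V : Set (EuclideanSpace ℝ (Fin m))) (hV : IsOpen V) (hne : V.Nonempty)
    (hproper : V ≠ Set.univ) (ε : ℝ) (hε : 0 < ε) :
    ∃ (v : ℕ → EuclideanSpace ℝ (Fin m)) (t : ℕ → ℝ),
      (∀ i, v i ∈ V) ∧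
      (∀ i, 0 < t i) ∧
      V = ⋃ i, Metric.ball (v i) (t i) ∧
      (∀ i, t i ≤ ε) ∧
      (∀ α > 0, ∀ x : EuclideanSpace ℝ (Fin m),
        {i : ℕ | x ∈ Metric.ball (v i) (α * t i)}.Finite) ∧
      Tendsto (fun i => t i / Metric.infDist (v i) Vᶜ) atTop (𝓝 (0 : ℝ)) :=
  exists_good_ball_cover_general m V hV hne hproper ε hε
end
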